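/- arXiv:1602.04383 — 3 statements merged into one kernel-verified Lean document; each statement's English description precedes it below -/
import Mathlib

section
/- Let L_0 be a lattice in V with ε L_0 ⊆ L_0^# ⊆ L_0, and write L_{−1} = L_0^#. Then every 𝔬-submodule L of V with L_{−1} ⊆ L ⊆ L_0 and dim_k L_0/L = 1 is a lattice and satisfies ε L ⊆ L^# ⊆ L; in particular, L^# ⊆ L. -/
open scoped Classical

noncomputable section

namespace AffLat

variable (k : Type*) [Field k]

/-- The uniformizer `ε ∈ F = k((ε))`. -/
def eps : LaurentSeries k := algebraMap (PowerSeries k) (LaurentSeries k) PowerSeries.X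

/-- The subring `𝔬 = k[[ε]]` of `F = k((ε))`. -/
def oring : Subring (LaurentSeries k) :=
  (algebraMap (PowerSeries k) (LaurentSeries k)).range

variable {k}
variable {V : Type*} [AddCommGroup V] [Module (LaurentSeries k) V]
  [Module (PowerSeries k) V] [IsScalarTower (PowerSeries k) (LaurentSeries k) V]

/-- A lattice in `V`: a finitely generated `𝔬`-submodule `L` with `F·L = V`. -/
def IsLat (L : Submodule (PowerSeries k) V) : Prop :=
  L.FG ∧ Submodule.span (LaurentSeries k) (L : Set V) = ⊤

/-- The dual `L^# = {v ∈ V | ∀ x ∈ L, (v, x) ∈ 𝔬}` of an `𝔬`-submodule `L` with respect to a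
bilinear form `Φ`. -/
def sharp (Φ : V →ₗ[LaurentSeries k] V →ₗ[LaurentSeries k] LaurentSeries k)
    (L : Submodule (PowerSeries k) V) : Submodule (PowerSeries k) V where
  carrier := {v | ∀ x ∈ L, Φ v x ∈ oring k}
  zero_mem' := fun x _ => by rw [map_zero, LinearMap.zero_apply]; exact zero_mem _
  add_mem' := fun {a b} ha hb x hx => by
    rw [map_add, LinearMap.add_apply]; exact add_mem (ha x hx) (hb x hx)
  smul_mem' := fun c v hv x hx => by
    rw [← algebraMap_smul (LaurentSeries k) c v, map_smul, LinearMap.smul_apply, smul_eq_mul]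
    exact mul_mem ⟨c, rfl⟩ (hv x hx)

/-- The `𝔬`-submodule `a • L` for a scalar `a ∈ F`. -/
def esmul (a : LaurentSeries k) (L : Submodule (PowerSeries k) V) :
    Submodule (PowerSeries k) V where
  carrier := (fun v => a • v) '' (L : Set V)
  zero_mem' := ⟨0, L.zero_mem, smul_zero a⟩
  add_mem' := by
    rintro x y ⟨x', hx', rfl⟩ ⟨y', hy', rfl⟩
    exact ⟨x' + y', L.add_mem hx' hy', smul_add a x' y'⟩
  smul_mem' := by
    rintro c x ⟨x', hx', rfl⟩
    refine ⟨c • x', L.smul_mem c hx', ?_⟩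
    show a • (c • x') = c • (a • x')
    rw [← algebraMap_smul (LaurentSeries k) c x', ← algebraMap_smul (LaurentSeries k) c (a • x'),
      smul_smul, smul_smul, mul_comm]

/-- The quotient `p / s` of an `𝔬`-submodule `p` by the `𝔬`-submodule `s ∩ p`. -/
abbrev relQ (p s : Submodule (PowerSeries k) V) : Type _ :=
  ↥p ⧸ (s.comap p.subtype)

/-- The dimension over `k` of an `𝔬`-module (with the `k`-action coming from
`k → 𝔬 = k[[ε]]`). -/
def kdim (k : Type*) [Field k] (Q : Type*) [AddCommGroup Q] [Module (PowerSeries k) Q] : ℕ :=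
  @Module.finrank k Q _ _ (Module.compHom Q (PowerSeries.C (R := k)))

/-- Finite-dimensionality over `k` of an `𝔬`-module (with the `k`-action coming from
`k → 𝔬 = k[[ε]]`). -/
def kfinite (k : Type*) [Field k] (Q : Type*) [AddCommGroup Q] [Module (PowerSeries k) Q] :
    Prop :=
  @FiniteDimensional k Q _ _ (Module.compHom Q (PowerSeries.C (R := k)))

end AffLat

open AffLat

/-!
Since `ε L₀ ⊆ L₀^# ⊆ L ⊆ L₀`, the module `L` is squeezed between two lattices, hence is one, and
`ε L ⊆ ε L₀ ⊆ L₀^# ⊆ L^#`. Duality is an inclusion-reversing involution on lattices (the form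
being alternating and nondegenerate), so `L^# ⊆ (L₀^#)^# = L₀`. If some `v ∈ L^#` were not in `L`,
then `L₀ = L + 𝔬 v` because `L₀ / L` is one-dimensional over `k`; as `(v, v) = 0`, `v` would pair
integrally with all of `L₀`, i.e. `v ∈ L₀^# ⊆ L`, a contradiction.
-/

open scoped Pointwise

namespace LinearMap.BilinForm

variable {R K V : Type*} [CommRing R] [Field K] [Algebra R K] [AddCommGroup V] [Module R V]
  [Module K V] [IsScalarTower R K V] {B : LinearMap.BilinForm K V}

lemma dualSubmodule_anti (B : LinearMap.BilinForm K V) : Antitone (B.dualSubmodule (R := R)) :=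
  fun _ _ h _ hx y hy => hx y (h hy)

lemma IsAlt.flip_dualSubmodule (hB : B.IsAlt) (N : Submodule R V) :
    B.flip.dualSubmodule N = B.dualSubmodule N := by
  ext x
  simp only [mem_dualSubmodule, flip_apply, ← hB.neg_eq x, Submodule.neg_mem_iff]

lemma IsAlt.dualSubmodule_dualSubmodule [IsDomain R] [IsPrincipalIdealRing R]
    [IsFractionRing R K] (hB : B.IsAlt) (hB' : B.SeparatingLeft) (M : Submodule R V)
    [M.IsLattice K] : B.dualSubmodule (B.dualSubmodule M) = M := by
  let b := Module.Free.chooseBasis R M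
  have hspan : Submodule.span R (Set.range (b.extendOfIsLattice K)) = M := by
    have : Set.range (b.extendOfIsLattice K) = M.subtype '' Set.range b := by
      ext; simp
    rw [this, ← Submodule.map_span, b.span_eq, Submodule.map_top, Submodule.range_subtype]
  have hnd : B.Nondegenerate := hB.isRefl.nondegenerate_iff_separatingLeft.mpr hB'
  simpa only [hspan, hB.flip_dualSubmodule] using
    dualSubmodule_dualSubmodule_flip_of_basis (R := R) B hnd (b.extendOfIsLattice K)

lemma IsAlt.mem_dualSubmodule_of_le_sup_span (hB : B.IsAlt) {L L₀ : Submodule R V} {v : V}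
    (hv : v ∈ B.dualSubmodule L) (hL₀ : L₀ ≤ L ⊔ R ∙ v) : v ∈ B.dualSubmodule L₀ := by
  intro x hx
  obtain ⟨l, hl, _, hc, rfl⟩ := Submodule.mem_sup.mp (hL₀ hx)
  obtain ⟨c, rfl⟩ := Submodule.mem_span_singleton.mp hc
  simpa [map_smul_of_tower, hB.self_eq_zero] using hv l hl

end LinearMap.BilinForm

lemma Submodule.IsLattice.of_smul_le_of_le {R A V : Type*} [CommRing R] [IsNoetherianRing R]
    [CommRing A] [Algebra R A] [AddCommGroup V] [Module R V] [Module A V] [IsScalarTower R A V]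
    {L L₀ : Submodule R V} [L₀.IsLattice A] (a : Aˣ) (h₁ : a • L₀ ≤ L) (h₂ : L ≤ L₀) :
    L.IsLattice A :=
  of_le_of_isLattice_of_fg A h₁ (FG.of_le IsLattice.fg h₂)

namespace AffLat

variable {k : Type*} [Field k] {V : Type*} [AddCommGroup V]

lemma eps_ne_zero : eps k ≠ 0 :=
  (map_ne_zero_iff _ (IsFractionRing.injective (PowerSeries k) (LaurentSeries k))).mpr
    PowerSeries.X_ne_zero

lemma le_sup_span_of_kdim_relQ_eq_one [Module (PowerSeries k) V]
    {L L₀ : Submodule (PowerSeries k) V} (hdim : kdim k (relQ L₀ L) = 1) {v : V} (hv : v ∈ L₀)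
    (hvL : v ∉ L) : L₀ ≤ L ⊔ (PowerSeries k) ∙ v := by
  let _ : Module k (relQ L₀ L) := Module.compHom _ (PowerSeries.C (R := k))
  have hq : (Submodule.Quotient.mk ⟨v, hv⟩ : relQ L₀ L) ≠ 0 := by
    rwa [ne_eq, Submodule.Quotient.mk_eq_zero]
  intro x hx
  obtain ⟨c, hc⟩ := (finrank_eq_one_iff_of_nonzero' _ hq).mp hdim (Submodule.Quotient.mk ⟨x, hx⟩)
  have hxc : x - PowerSeries.C c • v ∈ L := by
    change (PowerSeries.C c • Submodule.Quotient.mk _ : relQ L₀ L) = _ at hc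
    rw [← Submodule.Quotient.mk_smul, Submodule.Quotient.eq] at hc
    simpa using L.neg_mem hc
  rw [← sub_add_cancel x (PowerSeries.C c • v)]
  exact Submodule.add_mem_sup hxc (Submodule.smul_mem _ _ (Submodule.mem_span_singleton_self v))

variable [Module (LaurentSeries k) V] [Module (PowerSeries k) V]
  [IsScalarTower (PowerSeries k) (LaurentSeries k) V]

lemma isLat_iff_isLattice {L : Submodule (PowerSeries k) V} :
    IsLat L ↔ L.IsLattice (LaurentSeries k) :=
  ⟨fun ⟨hfg, hspan⟩ => ⟨hfg, hspan⟩, fun ⟨hfg, hspan⟩ => ⟨hfg, hspan⟩⟩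

lemma sharp_eq_dualSubmodule (Φ : LinearMap.BilinForm (LaurentSeries k) V)
    (L : Submodule (PowerSeries k) V) : sharp Φ L = Φ.dualSubmodule L := by
  ext v
  simp only [sharp, oring, Submodule.mem_mk, AddSubmonoid.mem_mk, AddSubsemigroup.mem_mk,
    Set.mem_ofPred_eq, LinearMap.BilinForm.mem_dualSubmodule, Submodule.mem_one,
    RingHom.mem_range]

end AffLat

theorem statement4_general {k : Type*} [Field k]
    {V : Type*} [AddCommGroup V] [Module (LaurentSeries k) V]
    [Module (PowerSeries k) V] [IsScalarTower (PowerSeries k) (LaurentSeries k) V]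
    (Φ : V →ₗ[LaurentSeries k] V →ₗ[LaurentSeries k] LaurentSeries k)
    (halt : ∀ v : V, Φ v v = 0)
    (hnondeg : ∀ v : V, (∀ w : V, Φ v w = 0) → v = 0)
    (L₀ : Submodule (PowerSeries k) V) (hL₀ : IsLat L₀)
    (heps : ∀ v ∈ L₀, eps k • v ∈ sharp Φ L₀) :
    ∀ L : Submodule (PowerSeries k) V,
      sharp Φ L₀ ≤ L → L ≤ L₀ → kdim k (relQ L₀ L) = 1 →
      IsLat L ∧ (∀ v ∈ L, eps k • v ∈ sharp Φ L) ∧ sharp Φ L ≤ L := by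
  intro L hL₀L hLL₀ hdim
  simp only [isLat_iff_isLattice, sharp_eq_dualSubmodule] at hL₀ heps hL₀L ⊢
  have hB : LinearMap.BilinForm.IsAlt Φ := halt
  have hεL₀ : Units.mk0 (eps k) eps_ne_zero • L₀ ≤ L := by
    intro _ hεv
    obtain ⟨v, hv, rfl⟩ := (Submodule.mem_smul_pointwise_iff_exists _ _ _).mp hεv
    exact hL₀L (heps v hv)
  have hdual_anti := LinearMap.BilinForm.dualSubmodule_anti Φ (R := PowerSeries k)
  have hdual_le : LinearMap.BilinForm.dualSubmodule Φ L ≤ L₀ :=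
    hB.dualSubmodule_dualSubmodule hnondeg L₀ ▸ hdual_anti hL₀L
  refine ⟨.of_smul_le_of_le _ hεL₀ hLL₀, fun v hv => hdual_anti hLL₀ (heps v (hLL₀ hv)),
    fun v hv => ?_⟩
  by_contra hvL
  exact hvL (hL₀L (hB.mem_dualSubmodule_of_le_sup_span hv
    (le_sup_span_of_kdim_relQ_eq_one hdim (hdual_le hv) hvL)))

/-- Let `L₀` be a lattice with `ε L₀ ⊆ L₀^# ⊆ L₀` and `L₋₁ = L₀^#`.  Then
every `𝔬`-submodule `L` with `L₋₁ ⊆ L ⊆ L₀` and `dim_k L₀/L = 1` is a lattice and satisfies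
`ε L ⊆ L^# ⊆ L`; in particular `L^# ⊆ L`. -/
theorem statement4 {k : Type*} [Field k] [Fintype k] (hodd : Odd (Fintype.card k))
    {V : Type*} [AddCommGroup V] [Module (LaurentSeries k) V]
    [Module (PowerSeries k) V] [IsScalarTower (PowerSeries k) (LaurentSeries k) V]
    [FiniteDimensional (LaurentSeries k) V]
    (Φ : V →ₗ[LaurentSeries k] V →ₗ[LaurentSeries k] LaurentSeries k)
    (halt : ∀ v : V, Φ v v = 0)
    (hnondeg : ∀ v : V, (∀ w : V, Φ v w = 0) → v = 0)
    (L₀ : Submodule (PowerSeries k) V) (hL₀ : IsLat L₀)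
    (heps : ∀ v ∈ L₀, eps k • v ∈ sharp Φ L₀)
    (hsub : sharp Φ L₀ ≤ L₀) :
    ∀ L : Submodule (PowerSeries k) V,
      sharp Φ L₀ ≤ L → L ≤ L₀ → kdim k (relQ L₀ L) = 1 →
      IsLat L ∧ (∀ v ∈ L, eps k • v ∈ sharp Φ L) ∧ sharp Φ L ≤ L :=
  statement4_general Φ halt hnondeg L₀ hL₀ heps
end
end

section
/- For A ∈ Ξ_{n,d}, the transposed matrix Aᵗ (with (Aᵗ)_{ij} = a_{ji}) also lies in Ξ_{n,d}, and d_A − d_{Aᵗ} = (1/4)·( Σ_{i=1}^{n} ( ro(A)_i² − co(A)_i² ) − ( ro(A)_0 − co(A)_0 ) − ( ro(A)_{r+1} − co(A)_{r+1} ) ). -/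
open scoped Classical

noncomputable section

namespace AffMat

/-- Row sum `ro(A)_i = Σ_j a_{ij}`. -/
def ro (A : ℤ → ℤ → ℕ) (i : ℤ) : ℕ := ∑ᶠ j : ℤ, A i j

/-- Column sum `co(A)_j = Σ_i a_{ij}`. -/
def co (A : ℤ → ℤ → ℕ) (j : ℤ) : ℕ := ∑ᶠ i : ℤ, A i j

/-- Membership in `Ξ_{n,d}` (with `n = 2r+2`): a `ℤ×ℤ` matrix with entries in `ℕ` such that
`a_{ij} = a_{-i,-j} = a_{i-n,j-n}`, the entries `a_{00}` and `a_{r+1,r+1}` are odd, and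
`Σ_{i=1}^{n} Σ_{j ∈ ℤ} a_{ij} = 2d+2`. -/
def MemXi (r d : ℕ) (A : ℤ → ℤ → ℕ) : Prop :=
  (∀ i j : ℤ, A i j = A (-i) (-j)) ∧
  (∀ i j : ℤ, A i j = A (i - (2 * r + 2)) (j - (2 * r + 2))) ∧
  Odd (A 0 0) ∧ Odd (A ((r : ℤ) + 1) ((r : ℤ) + 1)) ∧
  (∑ᶠ j : ℤ, ∑ i ∈ Finset.Icc (1 : ℤ) (2 * r + 2), A i j) = 2 * d + 2

/-- `d_A = ½ (Σ_{0 ≤ i ≤ n-1, i ≥ k, j < l} a_{ij} a_{kl} - Σ_{i ≥ 0 > j} a_{ij}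
  - Σ_{i ≥ r+1 > j} a_{ij})`, as a rational number. -/
def dA (r : ℕ) (A : ℤ → ℤ → ℕ) : ℚ :=
  (1 / 2) *
    ((∑ᶠ i : ℤ, ∑ᶠ j : ℤ, ∑ᶠ m : ℤ, ∑ᶠ l : ℤ,
        if 0 ≤ i ∧ i ≤ 2 * (r : ℤ) + 1 ∧ m ≤ i ∧ j < l then ((A i j * A m l : ℕ) : ℚ) else 0)
      - (∑ᶠ i : ℤ, ∑ᶠ j : ℤ, if 0 ≤ i ∧ j < 0 then ((A i j : ℕ) : ℚ) else 0)
      - (∑ᶠ i : ℤ, ∑ᶠ j : ℤ,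
          if (r : ℤ) + 1 ≤ i ∧ j < (r : ℤ) + 1 then ((A i j : ℕ) : ℚ) else 0))

end AffMat

open AffMat

/-!
Write `a P = A P.1 P.2`. Periodicity, together with the finiteness of one period of rows (forced
by the row-sum condition), confines the support of `a` to a band `|i - j| ≤ B`, which makes every
sum below finite. A sum of a function invariant under the diagonal shift by `n` over one period of
rows equals its sum over any other fundamental domain of that shift, e.g. one period of columns.

The quadratic part of `d_A` sums `a P * a Q` over pairs with `P` in one period of rows and
`P - Q ∈ D = {d | 0 ≤ d.1 ∧ d.2 < 0}`; for `Aᵗ`, moving the window from columns back to rows turns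
`D` into its reflection `D'`. Exchanging `P` and `Q` (and moving the window again) shows that such
pair sums are invariant under `D ↦ -D`, and `D ∪ -D ∪ {d.2 = 0}` and `D' ∪ -D' ∪ {d.1 = 0}` are
both the closed quadrants `{d.1 * d.2 ≤ 0}`. Hence twice the difference of the quadratic parts is
`Σ ro_i² - Σ co_i²`.

The linear part is governed by the flux `F c = Σ_P a_P ([c ≤ P.1] - [c ≤ P.2])`: it satisfies
`F c - F (c + 1) = ro_c - co_c`, centrosymmetry gives `F (1 - c) = -F c` and periodicity
`F (c + n) = F c`, so `2 F 0 = ro_0 - co_0` and `2 F (r + 1) = ro_{r+1} - co_{r+1}`.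
-/

open Function Set

section FundamentalDomain

variable {X M : Type*} [AddGroup X] [AddCommMonoid M] {v : X}

theorem finsum_mem_eq_of_existsUnique_add_zsmul_mem {s t : Set X}
    (hs : ∀ x, ∃! k : ℤ, x + k • v ∈ s) (ht : ∀ x, ∃! k : ℤ, x + k • v ∈ t)
    {g : X → M} (hg : Periodic g v) : ∑ᶠ x ∈ s, g x = ∑ᶠ x ∈ t, g x := by
  choose k hk hk_unique using ht
  have add_add_zsmul (x : X) (i j : ℤ) : x + i • v + j • v = x + (i + j) • v := by
    rw [add_assoc, add_zsmul]
  refine finsum_mem_eq_of_bijOn (fun x => x + k x • v) ⟨fun x _ => hk x, ?_, ?_⟩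
    fun x _ => (hg.zsmul (k x) x).symm
  · intro x hx y hy (hxy : x + k x • v = y + k y • v)
    have hx' : y + (k y - k x) • v = x := by
      rw [sub_zsmul, ← add_assoc, ← hxy, add_neg_cancel_right]
    have h0 := (hs y).unique (y₁ := 0) (by simpa using hy) (hx' ▸ hx)
    rw [← hx', ← h0, zero_zsmul, add_zero]
  · intro y hy
    obtain ⟨j, hj, -⟩ := hs y
    refine ⟨y + j • v, hj, ?_⟩
    have h0 : j + k (y + j • v) = k y :=
      hk_unique y _ (by simpa [add_add_zsmul] using hk (y + j • v))
    have h1 : (0 : ℤ) = k y := hk_unique y 0 (by simpa using hy)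
    change y + j • v + k (y + j • v) • v = y
    rw [add_add_zsmul, h0, ← h1, zero_zsmul, add_zero]

theorem finsum_mem_preimage_Ico_eq {φ ψ : X → ℤ} {n : ℤ} (hn : 0 < n)
    (hφ : ∀ x (k : ℤ), φ (x + k • v) = φ x + k * n)
    (hψ : ∀ x (k : ℤ), ψ (x + k • v) = ψ x + k * n) {g : X → M} (hg : Periodic g v) (a b : ℤ) :
    ∑ᶠ x ∈ φ ⁻¹' Ico a (a + n), g x = ∑ᶠ x ∈ ψ ⁻¹' Ico b (b + n), g x := by
  refine finsum_mem_eq_of_existsUnique_add_zsmul_mem (fun x => ?_) (fun x => ?_) hg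
  · simpa [mem_preimage, hφ] using existsUnique_add_zsmul_mem_Ico hn (φ x) a
  · simpa [mem_preimage, hψ] using existsUnique_add_zsmul_mem_Ico hn (ψ x) b

theorem Function.Periodic.sum_Ico_eq {f : ℤ → M} {n : ℤ} (hf : Periodic f n) (hn : 0 < n)
    (a b : ℤ) : ∑ i ∈ Finset.Ico a (a + n), f i = ∑ i ∈ Finset.Ico b (b + n), f i := by
  rw [← finsum_mem_coe_finset, ← finsum_mem_coe_finset, Finset.coe_Ico, Finset.coe_Ico]
  exact finsum_mem_preimage_Ico_eq hn (φ := id) (ψ := id) (by simp) (by simp) hf a b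

end FundamentalDomain

section FinsumProd

variable {α β γ δ M : Type*} [AddCommMonoid M]

theorem finsum_mem_eq_finsum_finsum_ite {s : Set (α × β)} {f : α × β → M}
    (hf : (s ∩ support f).Finite) :
    ∑ᶠ p ∈ s, f p = ∑ᶠ a, ∑ᶠ b, if (a, b) ∈ s then f (a, b) else 0 := by
  rw [finsum_mem_def, finsum_curry _ (by rwa [HasFiniteSupport, support_indicator])]
  simp only [indicator_apply]

theorem finsum_mem_prod {s : Set α} {t : Set β} {f : α × β → M}
    (hf : (s ×ˢ t ∩ support f).Finite) :
    ∑ᶠ p ∈ s ×ˢ t, f p = ∑ᶠ a ∈ s, ∑ᶠ b ∈ t, f (a, b) := by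
  rw [finsum_mem_eq_finsum_finsum_ite hf, finsum_mem_def]
  refine finsum_congr fun a => ?_
  by_cases ha : a ∈ s
  · simp [ha, finsum_mem_def, indicator_apply]
  · simp [ha]

theorem finsum_mem_eq_finsum₄_ite {s : Set ((α × β) × (γ × δ))} {f : (α × β) × (γ × δ) → M}
    (hf : (s ∩ support f).Finite) :
    ∑ᶠ p ∈ s, f p =
      ∑ᶠ a, ∑ᶠ b, ∑ᶠ c, ∑ᶠ d, if ((a, b), (c, d)) ∈ s then f ((a, b), (c, d)) else 0 := by
  rw [finsum_mem_eq_finsum_finsum_ite hf, finsum_curry]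
  · refine finsum_congr fun a => finsum_congr fun b => ?_
    refine finsum_curry _ ((hf.image Prod.snd).subset fun Q hQ => ?_)
    by_cases hQs : ((a, b), Q) ∈ s
    · exact ⟨((a, b), Q), ⟨hQs, by simpa [hQs] using hQ⟩, rfl⟩
    · simp [hQs] at hQ
  · refine (hf.image Prod.fst).subset fun P hP => ?_
    obtain ⟨Q, hQ⟩ : ∃ Q, (if (P, Q) ∈ s then f (P, Q) else 0) ≠ 0 := by
      by_contra! h
      exact hP (finsum_eq_zero_of_forall_eq_zero h)
    by_cases hPQ : (P, Q) ∈ s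
    · exact ⟨(P, Q), ⟨hPQ, by simpa [hPQ] using hQ⟩, rfl⟩
    · simp [hPQ] at hQ

theorem finsum_ite_fst_eq [DecidableEq α] (f : α × β → M) (a : α) :
    ∑ᶠ p : α × β, (if p.1 = a then f p else 0) = ∑ᶠ b, f (a, b) := by
  rw [← finsum_mem_range (Prod.mk_right_injective a), finsum_mem_def]
  exact finsum_congr fun p => by simp [indicator_apply, eq_comm, Prod.ext_iff]

theorem finsum_ite_snd_eq [DecidableEq β] (f : α × β → M) (b : β) :
    ∑ᶠ p : α × β, (if p.2 = b then f p else 0) = ∑ᶠ a, f (a, b) := by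
  rw [← finsum_mem_range (Prod.mk_left_injective b), finsum_mem_def]
  exact finsum_congr fun p => by simp [indicator_apply, eq_comm, Prod.ext_iff]

end FinsumProd

namespace AffMat

section Banded

variable {M : Type*} [Zero M] {a : ℤ × ℤ → M}

def IsBanded (a : ℤ × ℤ → M) : Prop := ∃ B : ℤ, ∀ P, a P ≠ 0 → |P.1 - P.2| ≤ B

theorem IsBanded.comp_swap (ha : IsBanded a) : IsBanded (a ∘ Prod.swap) := by
  obtain ⟨B, hB⟩ := ha
  exact ⟨B, fun P hP => abs_sub_comm P.1 P.2 ▸ hB P.swap hP⟩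

theorem IsBanded.map {N : Type*} [Zero N] (ha : IsBanded a) (f : M → N) (hf : f 0 = 0) :
    IsBanded (f ∘ a) := by
  obtain ⟨B, hB⟩ := ha
  exact ⟨B, fun P hP => hB P fun h => hP (by simp [h, hf])⟩

theorem IsBanded.finite_inter_support (ha : IsBanded a) (c c' : ℤ) :
    ({P : ℤ × ℤ | c ≤ max P.1 P.2 ∧ min P.1 P.2 ≤ c'} ∩ support a).Finite := by
  obtain ⟨B, hB⟩ := ha
  refine ((finite_Icc (c - B) (c' + B)).prod (finite_Icc (c - B) (c' + B))).subset ?_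
  rintro P ⟨⟨hc, hc'⟩, hP⟩
  have := abs_le.1 (hB P hP)
  simp only [le_max_iff, min_le_iff] at hc hc'
  exact ⟨⟨by omega, by omega⟩, by omega, by omega⟩

theorem IsBanded.hasFiniteSupport_row (ha : IsBanded a) (i : ℤ) :
    HasFiniteSupport fun j => a (i, j) :=
  ((ha.finite_inter_support i i).image Prod.snd).subset fun j hj =>
    ⟨(i, j), ⟨⟨le_max_left _ _, min_le_left _ _⟩, hj⟩, rfl⟩

theorem IsBanded.hasFiniteSupport_col (ha : IsBanded a) (j : ℤ) :
    HasFiniteSupport fun i => a (i, j) :=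
  ((ha.finite_inter_support j j).image Prod.fst).subset fun i hi =>
    ⟨(i, j), ⟨⟨le_max_right _ _, min_le_right _ _⟩, hi⟩, rfl⟩

end Banded

section PeriodicArray

variable {M : Type*} [AddCommMonoid M] {n : ℤ} {a : ℤ × ℤ → M}

theorem isBanded_of_periodic (hn : 0 < n) (hper : Periodic a (n, n)) (b : ℤ)
    (hfin : ({P : ℤ × ℤ | P.1 ∈ Ico b (b + n)} ∩ support a).Finite) : IsBanded a := by
  obtain ⟨B, hB⟩ := (hfin.image fun P => |P.1 - P.2|).bddAbove
  refine ⟨B, fun P hP => ?_⟩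
  obtain ⟨k, hk, -⟩ := existsUnique_add_zsmul_mem_Ico hn P.1 b
  have hQ : a (P + k • (n, n)) ≠ 0 := by rwa [hper.zsmul k P]
  simpa using hB ⟨P + k • (n, n), ⟨by simpa using hk, hQ⟩, rfl⟩

theorem periodic_finsum_row (hper : Periodic a (n, n)) :
    Periodic (fun i => ∑ᶠ j, a (i, j)) n := fun i => by
  change ∑ᶠ j, a (i + n, j) = ∑ᶠ j, a (i, j)
  rw [← finsum_comp_equiv (Equiv.addRight n)]
  exact finsum_congr fun j => hper (i, j)

theorem finsum_sum_Ico_comp_swap (hn : 0 < n) (hper : Periodic a (n, n)) (ha : IsBanded a)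
    (b : ℤ) :
    ∑ᶠ j, ∑ i ∈ Finset.Ico b (b + n), a (j, i) = ∑ᶠ j, ∑ i ∈ Finset.Ico b (b + n), a (i, j) := by
  have hcolumns {f : ℤ × ℤ → M} (hf : IsBanded f) :
      ∑ᶠ j, ∑ i ∈ Finset.Ico b (b + n), f (j, i) = ∑ᶠ Q ∈ Prod.snd ⁻¹' Ico b (b + n), f Q := by
    rw [← univ_prod, finsum_mem_prod, finsum_mem_univ]
    · exact finsum_congr fun j => by rw [← Finset.coe_Ico, finsum_mem_coe_finset]
    · exact (hf.finite_inter_support b (b + n)).subset fun Q ⟨⟨_, hQ₁, hQ₂⟩, hQ⟩ =>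
        ⟨⟨le_max_of_le_right hQ₁, min_le_of_right_le hQ₂.le⟩, hQ⟩
  have hrows := hcolumns ha.comp_swap
  simp only [comp_apply, Prod.swap_prod_mk] at hrows
  rw [hcolumns ha, hrows,
    ← finsum_mem_preimage_Ico_eq hn (φ := Prod.fst) (by simp) (by simp) hper b b]
  exact finsum_mem_eq_of_bijOn (Equiv.prodComm ℤ ℤ)
    ((Equiv.prodComm ℤ ℤ).bijOn' (fun P hP => hP) fun P hP => hP) fun P _ => rfl

end PeriodicArray

section PairSum

open scoped Pointwise

def antidiagQuadrants : Set (ℤ × ℤ) := {d | 0 ≤ d.1 ∧ d.2 ≤ 0 ∨ d.1 ≤ 0 ∧ 0 ≤ d.2}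

variable {R : Type*} [CommRing R] {n : ℤ} {a : ℤ × ℤ → R}

def pairTerm (a : ℤ × ℤ → R) (D : Set (ℤ × ℤ)) (p : (ℤ × ℤ) × (ℤ × ℤ)) : R :=
  if p.1 - p.2 ∈ D then a p.1 * a p.2 else 0

/-- The quadratic part of `d_A` is `pairSum (2 * r + 2) a {d | 0 ≤ d.1 ∧ d.2 < 0}`. -/
def pairSum (n : ℤ) (a : ℤ × ℤ → R) (D : Set (ℤ × ℤ)) : R :=
  ∑ᶠ p ∈ {p : (ℤ × ℤ) × (ℤ × ℤ) | p.1.1 ∈ Ico 0 n}, pairTerm a D p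

theorem periodic_pairTerm (hper : Periodic a (n, n)) (D : Set (ℤ × ℤ)) :
    Periodic (pairTerm a D) ((n, n), (n, n)) := fun p => by
  simp only [pairTerm, Prod.fst_add, Prod.snd_add, add_sub_add_right_eq_sub, hper p.1, hper p.2]

theorem pairSum_eq_window (hn : 0 < n) (hper : Periodic a (n, n)) (D : Set (ℤ × ℤ))
    {φ : (ℤ × ℤ) × (ℤ × ℤ) → ℤ} (hφ : ∀ p (k : ℤ), φ (p + k • ((n, n), (n, n))) = φ p + k * n) :
    pairSum n a D = ∑ᶠ p ∈ φ ⁻¹' Ico 0 n, pairTerm a D p := by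
  simpa [pairSum] using finsum_mem_preimage_Ico_eq hn (φ := fun p => p.1.1) (by simp) hφ
    (periodic_pairTerm hper D) 0 0

theorem pairSum_comp_swap (hn : 0 < n) (hper : Periodic a (n, n)) (D : Set (ℤ × ℤ)) :
    pairSum n (a ∘ Prod.swap) D = pairSum n a (Prod.swap ⁻¹' D) := by
  rw [pairSum_eq_window hn hper _ (φ := fun p => p.1.2) (by simp)]
  let e := Equiv.prodCongr (Equiv.prodComm ℤ ℤ) (Equiv.prodComm ℤ ℤ)
  refine finsum_mem_eq_of_bijOn e (e.bijOn' (fun p hp => hp) (fun p hp => hp)) fun p _ => ?_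
  simp [pairTerm, e]

theorem pairSum_neg (hn : 0 < n) (hper : Periodic a (n, n)) (D : Set (ℤ × ℤ)) :
    pairSum n a (-D) = pairSum n a D := by
  rw [pairSum_eq_window hn hper (-D) (φ := fun p => p.2.1) (by simp)]
  let e := Equiv.prodComm (ℤ × ℤ) (ℤ × ℤ)
  refine finsum_mem_eq_of_bijOn e (e.bijOn' (fun p hp => hp) (fun p hp => hp)) fun p _ => ?_
  simp [pairTerm, e, mul_comm]

theorem IsBanded.finite_pairTerm (ha : IsBanded a) {D : Set (ℤ × ℤ)}
    (hD : D ⊆ antidiagQuadrants) :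
    ({p : (ℤ × ℤ) × (ℤ × ℤ) | p.1.1 ∈ Ico 0 n} ∩ support (pairTerm a D)).Finite := by
  obtain ⟨B, hB⟩ := id ha
  -- Within the band, a displacement `P - Q` in these quadrants has `|P.1 - Q.1| ≤ 2 * B`.
  refine ((ha.finite_inter_support 0 n).prod
    (ha.finite_inter_support (-2 * B) (n + 2 * B))).subset ?_
  rintro ⟨P, Q⟩ ⟨⟨hP0, hPn⟩, hPQ⟩
  have hPQD : P - Q ∈ D := by
    by_contra h
    simp [pairTerm, h] at hPQ
  have hPQ' : a P * a Q ≠ 0 := by simpa [pairTerm, hPQD] using hPQ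
  have hP := abs_le.1 (hB P (left_ne_zero_of_mul hPQ'))
  have hQ := abs_le.1 (hB Q (right_ne_zero_of_mul hPQ'))
  have hquad : 0 ≤ P.1 - Q.1 ∧ P.2 - Q.2 ≤ 0 ∨ P.1 - Q.1 ≤ 0 ∧ 0 ≤ P.2 - Q.2 := hD hPQD
  dsimp only at hP0 hPn
  simp only [mem_prod, mem_inter_iff, mem_ofPred_eq, le_max_iff, min_le_iff]
  exact ⟨⟨⟨by omega, by omega⟩, left_ne_zero_of_mul hPQ'⟩, ⟨by omega, by omega⟩,
    right_ne_zero_of_mul hPQ'⟩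

theorem pairSum_union (ha : IsBanded a) {D D' : Set (ℤ × ℤ)} (hDD' : Disjoint D D')
    (hD : D ∪ D' ⊆ antidiagQuadrants) :
    pairSum n a (D ∪ D') = pairSum n a D + pairSum n a D' := by
  have hterm : pairTerm a (D ∪ D') = fun p => pairTerm a D p + pairTerm a D' p := by
    ext p
    by_cases h : p.1 - p.2 ∈ D
    · simp [pairTerm, h, hDD'.notMem_of_mem_left h]
    · simp [pairTerm, h]
  rw [pairSum, hterm, finsum_mem_add_distrib' (ha.finite_pairTerm (subset_union_left.trans hD))
    (ha.finite_pairTerm (subset_union_right.trans hD))]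
  rfl

theorem pairSum_antidiagQuadrants (hn : 0 < n) (hper : Periodic a (n, n)) (ha : IsBanded a)
    {D E : Set (ℤ × ℤ)} (hD : Disjoint D (-D)) (hE : Disjoint (D ∪ -D) E)
    (hDE : D ∪ -D ∪ E = antidiagQuadrants) :
    pairSum n a antidiagQuadrants = 2 * pairSum n a D + pairSum n a E := by
  rw [← hDE, pairSum_union ha hE hDE.le,
    pairSum_union ha hD (subset_union_left.trans hDE.le), pairSum_neg hn hper, two_mul]

theorem pairSum_setOf_fst_eq_zero (ha : IsBanded a) :
    pairSum n a {d | d.1 = 0} = ∑ i ∈ Finset.Ico 0 n, (∑ᶠ j, a (i, j)) ^ 2 := by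
  have hwindow :
      {p : (ℤ × ℤ) × (ℤ × ℤ) | p.1.1 ∈ Ico 0 n} = (Prod.fst ⁻¹' Ico 0 n) ×ˢ univ := by
    ext; simp
  have hinner (P : ℤ × ℤ) : ∑ᶠ Q, pairTerm a {d | d.1 = 0} (P, Q) = a P * ∑ᶠ j, a (P.1, j) :=
    calc ∑ᶠ Q, pairTerm a {d | d.1 = 0} (P, Q)
        _ = ∑ᶠ Q : ℤ × ℤ, if Q.1 = P.1 then a P * a Q else 0 :=
          finsum_congr fun Q => by simp [pairTerm, sub_eq_zero, eq_comm]
        _ = ∑ᶠ j, a P * a (P.1, j) := finsum_ite_fst_eq _ _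
        _ = a P * ∑ᶠ j, a (P.1, j) := (mul_finsum' _ _ (ha.hasFiniteSupport_row P.1)).symm
  have hfin : (Ico 0 n ×ˢ univ ∩ support fun P => a P * ∑ᶠ j, a (P.1, j)).Finite :=
    (ha.finite_inter_support 0 n).subset fun P ⟨⟨⟨h0, hn⟩, _⟩, hP⟩ =>
      ⟨⟨le_max_of_le_left h0, min_le_of_left_le hn.le⟩, left_ne_zero_of_mul hP⟩
  have hrows : {d : ℤ × ℤ | d.1 = 0} ⊆ antidiagQuadrants := fun d (hd : d.1 = 0) => by
    simp [antidiagQuadrants, hd]; omega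
  rw [pairSum, hwindow, finsum_mem_prod (hwindow ▸ ha.finite_pairTerm hrows)]
  simp_rw [finsum_mem_univ, hinner]
  rw [← prod_univ, finsum_mem_prod hfin, ← Finset.coe_Ico, finsum_mem_coe_finset]
  refine Finset.sum_congr rfl fun i _ => ?_
  rw [finsum_mem_univ, sq, finsum_mul' _ _ (ha.hasFiniteSupport_row i)]

theorem two_mul_pairSum_sub_pairSum_comp_swap (hn : 0 < n) (hper : Periodic a (n, n))
    (ha : IsBanded a) :
    2 * (pairSum n a {d | 0 ≤ d.1 ∧ d.2 < 0}
        - pairSum n (a ∘ Prod.swap) {d | 0 ≤ d.1 ∧ d.2 < 0}) =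
      ∑ i ∈ Finset.Ico 0 n, ((∑ᶠ j, a (i, j)) ^ 2 - (∑ᶠ j, a (j, i)) ^ 2) := by
  set D : Set (ℤ × ℤ) := {d | 0 ≤ d.1 ∧ d.2 < 0}
  have hcols := pairSum_antidiagQuadrants hn hper ha (D := D) (E := {d | d.2 = 0})
    (by rw [disjoint_left]; simp [D]; omega) (by rw [disjoint_left]; simp [D]; omega)
    (by ext; simp [D, antidiagQuadrants]; omega)
  have hrows := pairSum_antidiagQuadrants hn hper ha (D := Prod.swap ⁻¹' D) (E := {d | d.1 = 0})
    (by rw [disjoint_left]; simp [D]; omega) (by rw [disjoint_left]; simp [D]; omega)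
    (by ext; simp [D, antidiagQuadrants]; omega)
  have hsq := pairSum_setOf_fst_eq_zero ha (n := n)
  have hsq_swap := pairSum_setOf_fst_eq_zero ha.comp_swap (n := n)
  rw [pairSum_comp_swap hn hper] at hsq_swap ⊢
  simp only [comp_apply, Prod.swap_prod_mk] at hsq_swap
  change pairSum n a {d | d.2 = 0} = _ at hsq_swap
  rw [Finset.sum_sub_distrib, ← hsq, ← hsq_swap]
  linear_combination hrows - hcols

end PairSum

section Flux

variable {M : Type*} [AddCommGroup M] {n : ℤ} {a : ℤ × ℤ → M}

def flux (a : ℤ × ℤ → M) (c : ℤ) : M :=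
  ∑ᶠ P : ℤ × ℤ, ((if c ≤ P.1 then a P else 0) - if c ≤ P.2 then a P else 0)

theorem IsBanded.hasFiniteSupport_flux_summand (ha : IsBanded a) (c : ℤ) :
    HasFiniteSupport fun P : ℤ × ℤ =>
      (if c ≤ P.1 then a P else 0) - if c ≤ P.2 then a P else 0 := by
  refine (ha.finite_inter_support c c).subset fun P hP => ?_
  simp only [mem_inter_iff, mem_ofPred_eq, le_max_iff, min_le_iff, mem_support] at hP ⊢
  split_ifs at hP <;> simp_all <;> omega

theorem flux_sub_flux_add_one (ha : IsBanded a) (c : ℤ) :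
    flux a c - flux a (c + 1) = ∑ᶠ j, a (c, j) - ∑ᶠ i, a (i, c) := by
  have hrow : HasFiniteSupport fun P : ℤ × ℤ => if P.1 = c then a P else 0 :=
    (ha.finite_inter_support c c).subset fun P hP => by
      simp only [mem_inter_iff, mem_ofPred_eq, le_max_iff, min_le_iff, mem_support] at hP ⊢
      split_ifs at hP <;> simp_all
  have hcol : HasFiniteSupport fun P : ℤ × ℤ => if P.2 = c then a P else 0 :=
    (ha.finite_inter_support c c).subset fun P hP => by
      simp only [mem_inter_iff, mem_ofPred_eq, le_max_iff, min_le_iff, mem_support] at hP ⊢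
      split_ifs at hP <;> simp_all
  rw [flux, flux, ← finsum_sub_distrib (ha.hasFiniteSupport_flux_summand c)
    (ha.hasFiniteSupport_flux_summand (c + 1)), ← finsum_ite_fst_eq, ← finsum_ite_snd_eq,
    ← finsum_sub_distrib hrow hcol]
  refine finsum_congr fun P => ?_
  split_ifs <;> first | (exfalso; omega) | abel

theorem flux_one_sub (hsym : ∀ P, a (-P) = a P) (c : ℤ) : flux a (1 - c) = -flux a c := by
  rw [flux, ← finsum_comp_equiv (Equiv.neg _), flux, ← finsum_neg_distrib]
  refine finsum_congr fun P => ?_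
  simp only [Equiv.neg_apply, Prod.fst_neg, Prod.snd_neg, hsym]
  split_ifs <;> first | (exfalso; omega) | abel

theorem periodic_flux (hper : Periodic a (n, n)) : Periodic (flux a) n := fun c => by
  rw [flux, ← finsum_comp_equiv (Equiv.addRight ((n, n) : ℤ × ℤ)), flux]
  simp [hper _]

theorem two_nsmul_flux (hsym : ∀ P, a (-P) = a P) (hper : Periodic a (n, n)) (ha : IsBanded a)
    {c k : ℤ} (hc : 2 * c = k * n) : 2 • flux a c = ∑ᶠ j, a (c, j) - ∑ᶠ i, a (i, c) := by
  have hflip : flux a (c + 1) = -flux a c := by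
    rw [← flux_one_sub hsym, ← (periodic_flux hper).int_mul k (1 - c)]
    congr 1
    push_cast
    linarith
  rw [← flux_sub_flux_add_one ha, hflip, sub_neg_eq_add, two_nsmul]

theorem finsum_mem_sub_finsum_mem_comp_swap (ha : IsBanded a) (c : ℤ) :
    ∑ᶠ P ∈ {P : ℤ × ℤ | c ≤ P.1 ∧ P.2 < c}, a P
      - ∑ᶠ P ∈ {P : ℤ × ℤ | c ≤ P.1 ∧ P.2 < c}, (a ∘ Prod.swap) P = flux a c := by
  have hswap : ∑ᶠ P ∈ {P : ℤ × ℤ | c ≤ P.1 ∧ P.2 < c}, (a ∘ Prod.swap) P =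
      ∑ᶠ P ∈ {P : ℤ × ℤ | c ≤ P.2 ∧ P.1 < c}, a P :=
    finsum_mem_eq_of_bijOn (Equiv.prodComm ℤ ℤ)
      ((Equiv.prodComm ℤ ℤ).bijOn' (fun P hP => hP) fun P hP => hP) fun P _ => rfl
  have hfin (s : Set (ℤ × ℤ)) (hs : s ⊆ {P | c ≤ max P.1 P.2 ∧ min P.1 P.2 ≤ c}) :
      HasFiniteSupport (s.indicator a) := by
    rw [HasFiniteSupport, support_indicator]
    exact (ha.finite_inter_support c c).subset (inter_subset_inter_left _ hs)
  rw [hswap, finsum_mem_def, finsum_mem_def, ← finsum_sub_distrib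
    (hfin _ fun P hP => by simp only [mem_ofPred_eq] at hP ⊢; omega)
    (hfin _ fun P hP => by simp only [mem_ofPred_eq] at hP ⊢; omega), flux]
  refine finsum_congr fun P => ?_
  simp only [indicator_apply, mem_ofPred_eq]
  split_ifs <;> first | (exfalso; omega) | abel

end Flux

theorem dA_eq (r : ℕ) {A : ℤ → ℤ → ℕ} {q : ℤ × ℤ → ℚ} (hq : ∀ P, q P = A P.1 P.2)
    (hband : IsBanded q) :
    dA r A = 1 / 2 * (pairSum (2 * r + 2) q {d | 0 ≤ d.1 ∧ d.2 < 0}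
      - ∑ᶠ P ∈ {P : ℤ × ℤ | 0 ≤ P.1 ∧ P.2 < 0}, q P
      - ∑ᶠ P ∈ {P : ℤ × ℤ | (r : ℤ) + 1 ≤ P.1 ∧ P.2 < (r : ℤ) + 1}, q P) := by
  have hcross (c : ℤ) : ∑ᶠ P ∈ {P : ℤ × ℤ | c ≤ P.1 ∧ P.2 < c}, q P =
      ∑ᶠ i, ∑ᶠ j, if c ≤ i ∧ j < c then ((A i j : ℕ) : ℚ) else 0 := by
    rw [finsum_mem_eq_finsum_finsum_ite (s := {P : ℤ × ℤ | c ≤ P.1 ∧ P.2 < c})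
      ((hband.finite_inter_support c c).subset
        fun P ⟨⟨h₁, h₂⟩, hP⟩ => ⟨⟨le_max_of_le_left h₁, min_le_of_right_le h₂.le⟩, hP⟩)]
    simp only [mem_ofPred_eq, hq]
  have hfin := hband.finite_pairTerm (n := 2 * r + 2) (D := {d | 0 ≤ d.1 ∧ d.2 < 0})
    fun d hd => Or.inl ⟨hd.1, hd.2.le⟩
  rw [dA, hcross, hcross, pairSum, finsum_mem_eq_finsum₄_ite hfin]
  congr 3
  refine finsum_congr fun i => finsum_congr fun j => finsum_congr fun m => finsum_congr fun l => ?_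
  simp only [pairTerm, mem_ofPred_eq, mem_Ico, Prod.mk_sub_mk, Nat.cast_mul, hq]
  split_ifs <;> first | rfl | (exfalso; omega)

section Xi

variable {r d : ℕ} {A : ℤ → ℤ → ℕ}

theorem MemXi.periodic (hA : MemXi r d A) :
    Periodic (fun P : ℤ × ℤ => A P.1 P.2) (2 * r + 2, 2 * r + 2) := fun P => by
  simpa using hA.2.1 (P.1 + (2 * r + 2)) (P.2 + (2 * r + 2))

theorem MemXi.isBanded (hA : MemXi r d A) : IsBanded fun P : ℤ × ℤ => A P.1 P.2 := by
  have hcols : HasFiniteSupport fun j => ∑ i ∈ Finset.Icc (1 : ℤ) (2 * r + 2), A i j :=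
    hasFiniteSupport_of_finsum_ne_zero (by rw [hA.2.2.2.2]; omega)
  refine isBanded_of_periodic (by positivity) hA.periodic 1
    (((finite_Icc (1 : ℤ) (2 * r + 2)).prod hcols).subset ?_)
  rintro P ⟨⟨h₁, h₂⟩, hP⟩
  refine ⟨⟨h₁, by omega⟩, fun h => hP ?_⟩
  exact Finset.sum_eq_zero_iff.1 h P.1 (Finset.mem_Icc.2 ⟨h₁, by omega⟩)

theorem MemXi.transpose (hA : MemXi r d A) : MemXi r d fun i j => A j i := by
  obtain ⟨hsym, hper, hodd₀, hodd₁, hsum⟩ := id hA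
  refine ⟨fun i j => hsym j i, fun i j => hper j i, hodd₀, hodd₁, ?_⟩
  rw [← Finset.Ico_add_one_right_eq_Icc, add_comm (2 * (r : ℤ) + 2) 1] at hsum ⊢
  exact (finsum_sum_Ico_comp_swap (by positivity) hA.periodic hA.isBanded 1).trans hsum

end Xi

theorem dA_sub_dA_transpose {r : ℕ} {A : ℤ → ℤ → ℕ} (hsym : ∀ i j, A i j = A (-i) (-j))
    (hper : Periodic (fun P : ℤ × ℤ => A P.1 P.2) (2 * r + 2, 2 * r + 2))
    (hband : IsBanded fun P : ℤ × ℤ => A P.1 P.2) :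
    dA r A - dA r (fun i j => A j i) =
      1 / 4 * ((∑ i ∈ Finset.Icc (1 : ℤ) (2 * r + 2), ((ro A i : ℚ) ^ 2 - (co A i : ℚ) ^ 2))
        - ((ro A 0 : ℚ) - (co A 0 : ℚ)) - ((ro A (r + 1) : ℚ) - (co A (r + 1) : ℚ))) := by
  set q : ℤ × ℤ → ℚ := fun P => (A P.1 P.2 : ℚ)
  have hn : (0 : ℤ) < 2 * r + 2 := by positivity
  have hq : IsBanded q := hband.map Nat.cast Nat.cast_zero
  have hq_per : Periodic q (2 * r + 2, 2 * r + 2) := fun P => congrArg Nat.cast (hper P)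
  have hq_sym (P : ℤ × ℤ) : q (-P) = q P := by simp [q, ← hsym]
  have hro (i : ℤ) : (ro A i : ℚ) = ∑ᶠ j, q (i, j) :=
    (Nat.castAddMonoidHom ℚ).map_finsum (hband.hasFiniteSupport_row i)
  have hco (j : ℤ) : (co A j : ℚ) = ∑ᶠ i, q (i, j) :=
    (Nat.castAddMonoidHom ℚ).map_finsum (hband.hasFiniteSupport_col j)
  have hsquares : Periodic (fun i => (∑ᶠ j, q (i, j)) ^ 2 - (∑ᶠ j, q (j, i)) ^ 2) (2 * r + 2) :=
    ((periodic_finsum_row hq_per).comp (· ^ 2)).sub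
      ((periodic_finsum_row (a := q ∘ Prod.swap) fun P => hq_per P.swap).comp (· ^ 2))
  have hquad := two_mul_pairSum_sub_pairSum_comp_swap hn hq_per hq
  have hcross₀ := finsum_mem_sub_finsum_mem_comp_swap hq 0
  have hcross₁ := finsum_mem_sub_finsum_mem_comp_swap hq (r + 1)
  have hflux₀ := two_nsmul_flux hq_sym hq_per hq (c := 0) (k := 0) (by ring)
  have hflux₁ := two_nsmul_flux hq_sym hq_per hq (c := r + 1) (k := 1) (by ring)
  rw [two_nsmul] at hflux₀ hflux₁
  simp only [hro, hco]
  rw [dA_eq r (fun _ => rfl) hq, dA_eq r (q := q ∘ Prod.swap) (fun _ => rfl) hq.comp_swap,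
    ← Finset.Ico_add_one_right_eq_Icc, add_comm (2 * (r : ℤ) + 2) 1,
    hsquares.sum_Ico_eq hn 1 0, zero_add]
  linear_combination (1 / 4 : ℚ) * hquad - (1 / 2 : ℚ) * (hcross₀ + hcross₁)
    - (1 / 4 : ℚ) * (hflux₀ + hflux₁)

end AffMat

theorem statement14_general (r d : ℕ) (A : ℤ → ℤ → ℕ) (hA : MemXi r d A) :
    MemXi r d (fun i j => A j i) ∧
    dA r A - dA r (fun i j => A j i) =
      (1 / 4) *
        ((∑ i ∈ Finset.Icc (1 : ℤ) (2 * r + 2), ((ro A i : ℚ) ^ 2 - (co A i : ℚ) ^ 2))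
          - ((ro A 0 : ℚ) - (co A 0 : ℚ))
          - ((ro A ((r : ℤ) + 1) : ℚ) - (co A ((r : ℤ) + 1) : ℚ))) :=
  ⟨hA.transpose, dA_sub_dA_transpose hA.1 hA.periodic hA.isBanded⟩

/-- For `A ∈ Ξ_{n,d}`, the transpose `Aᵗ` also lies in `Ξ_{n,d}` and
`d_A - d_{Aᵗ} = ¼ (Σ_{i=1}^n (ro(A)_i² - co(A)_i²) - (ro(A)_0 - co(A)_0)
  - (ro(A)_{r+1} - co(A)_{r+1}))`. -/
theorem statement14 (r d : ℕ) (hd : 1 ≤ d) (A : ℤ → ℤ → ℕ) (hA : MemXi r d A) :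
    MemXi r d (fun i j => A j i) ∧
    dA r A - dA r (fun i j => A j i) =
      (1 / 4) *
        ((∑ i ∈ Finset.Icc (1 : ℤ) (2 * r + 2), ((ro A i : ℚ) ^ 2 - (co A i : ℚ) ^ 2))
          - ((ro A 0 : ℚ) - (co A 0 : ℚ))
          - ((ro A ((r : ℤ) + 1) : ℚ) - (co A ((r : ℤ) + 1) : ℚ))) :=
  statement14_general r d A hA
end
end

section
/- Let A = (a_{ij}) be such a matrix, and let h ∈ {1, …, r−1}, k ∈ ℤ, R ∈ ℕ. Let t : ℤ → ℕ be finitely supported with Σ_{u∈ℤ} t_u = R and t_u = 0 for all u > k. Set M = A + R·(E^θ_{h,k} − E^θ_{h+1,k}) and M′ = A + Σ_{u∈ℤ} t_u·(E^θ_{h,u} − E^θ_{h+1,u}) (ℤ-valued ℤ×ℤ matrices). Then M′ ≤_alg M, i.e., for all integers i < j one has Σ_{(a,b): a ≤ i, b ≥ j} M′_{ab} ≤ Σ_{(a,b): a ≤ i, b ≥ j} M_{ab} (all these sums have only finitely many nonzero terms). -/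
/-!
All matrices involved agree with `A` up to a combination of the `E^θ`, so after splitting off
the (finite, by periodicity) cone sum of `A` it suffices to compare `Σ_u t_u c(u)` with `R c(k)`,
where `c(u)` is the cone sum `Σ_{a ≤ i, b ≥ j}` of `E^θ_{h,u} - E^θ_{h+1,u}`. Unfolding the
periodic matrices `E^{x,y}` as sums over the translates `(x + qn, y + qn)`, the cone sum of
`E^{x,y} - E^{x+1,y}` counts the `q` with `x + qn = i` and `y + qn ≥ j`, hence is monotone in `y`;
`E^θ_{h,u} - E^θ_{h+1,u}` is such a difference at `(h, u)` minus one at `(-h-1, -u)`, so `c` is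
monotone. As `t` lives on `u ≤ k` and has total mass `R`, `Σ_u t_u c(u) ≤ R c(k)`.
-/

open scoped Classical

noncomputable section

namespace AffMat

/-- The `n`-periodic matrix `E^{ij}` (integer valued): its `(a,b)` entry is `1` if
`(a,b) = (i+pn, j+pn)` for some `p ∈ ℤ`, and `0` otherwise. -/
def Eper (n i j : ℤ) : ℤ → ℤ → ℤ := fun a b =>
  if ∃ p : ℤ, a = i + p * n ∧ b = j + p * n then 1 else 0

/-- `E^θ_{ij} = E^{ij} + E^{-i,-j}`. -/
def Ethe (n i j : ℤ) : ℤ → ℤ → ℤ := fun a b => Eper n i j a b + Eper n (-i) (-j) a b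

end AffMat

open AffMat

open Function Set

namespace AffMat

def cone (i j : ℤ) : Set (ℤ × ℤ) := {p | p.1 ≤ i ∧ j ≤ p.2}

def coneSum (i j : ℤ) (F : ℤ → ℤ → ℤ) : ℤ := ∑ᶠ p, (cone i j).indicator (uncurry F) p

def ConeFinite (i j : ℤ) (F : ℤ → ℤ → ℤ) : Prop :=
  ((cone i j).indicator (uncurry F)).HasFiniteSupport

section ConeSum

variable {i j : ℤ} {F G : ℤ → ℤ → ℤ}

lemma coneFinite_iff : ConeFinite i j F ↔ (cone i j ∩ support (uncurry F)).Finite := by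
  rw [ConeFinite, HasFiniteSupport, support_indicator]

lemma ConeFinite.add (hF : ConeFinite i j F) (hG : ConeFinite i j G) :
    ConeFinite i j fun a b => F a b + G a b := by
  rw [ConeFinite, uncurry_def, ← Pi.add_def, indicator_add']
  exact HasFiniteSupport.add hF hG

lemma ConeFinite.sub (hF : ConeFinite i j F) (hG : ConeFinite i j G) :
    ConeFinite i j fun a b => F a b - G a b := by
  rw [ConeFinite, uncurry_def, ← Pi.sub_def, indicator_sub']
  exact HasFiniteSupport.sub hF hG

lemma ConeFinite.const_mul (c : ℤ) (hF : ConeFinite i j F) :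
    ConeFinite i j fun a b => c * F a b := by
  have : (cone i j).indicator (uncurry fun a b => c * F a b) =
      fun p => c * (cone i j).indicator (uncurry F) p :=
    funext fun _ => indicator_mul_right _ (fun _ => c) _
  rw [ConeFinite, this]
  exact HasFiniteSupport.fun_mul_right _ hF

lemma finsum_finsum_ite_eq_coneSum (hF : ConeFinite i j F) :
    ∑ᶠ a, ∑ᶠ b, (if a ≤ i ∧ j ≤ b then F a b else 0) = coneSum i j F := by
  rw [coneSum, finsum_curry _ hF]
  simp only [indicator_apply, cone, mem_ofPred_eq, uncurry_apply_pair]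

lemma coneSum_add (hF : ConeFinite i j F) (hG : ConeFinite i j G) :
    coneSum i j (fun a b => F a b + G a b) = coneSum i j F + coneSum i j G := by
  rw [coneSum, coneSum, coneSum, ← finsum_add_distrib hF hG]
  exact finsum_congr fun p => congrFun (indicator_add' _ _ _) p

lemma coneSum_sub (hF : ConeFinite i j F) (hG : ConeFinite i j G) :
    coneSum i j (fun a b => F a b - G a b) = coneSum i j F - coneSum i j G := by
  rw [coneSum, coneSum, coneSum, ← finsum_sub_distrib hF hG]
  exact finsum_congr fun p => congrFun (indicator_sub' _ _ _) p

lemma coneSum_const_mul (c : ℤ) :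
    coneSum i j (fun a b => c * F a b) = c * coneSum i j F := by
  rw [coneSum, coneSum, mul_finsum]
  exact finsum_congr fun p => indicator_mul_right _ _ _

lemma finsum_finsum_ite_add_eq_coneSum_add (hF : ConeFinite i j F) (hG : ConeFinite i j G) :
    ∑ᶠ a, ∑ᶠ b, (if a ≤ i ∧ j ≤ b then F a b + G a b else 0) =
      coneSum i j F + coneSum i j G := by
  rw [← coneSum_add hF hG, finsum_finsum_ite_eq_coneSum (hF.add hG)]

section FinsetSum

variable {ι : Type*} {f : ι → ℤ → ℤ → ℤ}

lemma cone_indicator_sum (s : Finset ι) :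
    (cone i j).indicator (uncurry fun a b => ∑ u ∈ s, f u a b) =
      fun p => ∑ u ∈ s, (cone i j).indicator (uncurry (f u)) p := by
  ext p
  simp only [indicator_apply, uncurry_def]
  split_ifs <;> simp

lemma ConeFinite.sum (hf : ∀ u, ConeFinite i j (f u)) (s : Finset ι) :
    ConeFinite i j fun a b => ∑ u ∈ s, f u a b := by
  rw [ConeFinite, cone_indicator_sum]
  exact HasFiniteSupport.sum hf s

lemma coneSum_sum (hf : ∀ u, ConeFinite i j (f u)) (s : Finset ι) :
    coneSum i j (fun a b => ∑ u ∈ s, f u a b) = ∑ u ∈ s, coneSum i j (f u) := by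
  rw [coneSum, cone_indicator_sum, finsum_sum_comm _ _ fun u _ => hf u]
  rfl

end FinsetSum

end ConeSum

section Diagonal

variable {n : ℤ}

lemma uncurry_Eper (n x y : ℤ) :
    uncurry (Eper n x y) = (range fun q : ℤ => (x + q * n, y + q * n)).indicator 1 := by
  ext ⟨a, b⟩
  simp only [uncurry_apply_pair, Eper, indicator_apply, mem_range, Prod.mk.injEq, Pi.one_apply]
  exact if_congr (exists_congr fun _ => and_congr eq_comm eq_comm) rfl rfl

lemma finite_setOf_diag_mem_cone (hn : 0 < n) (i j x y : ℤ) :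
    {q : ℤ | (x + q * n, y + q * n) ∈ cone i j}.Finite := by
  refine (finite_Icc (min 0 (j - y)) (max 0 (i - x))).subset fun q ⟨hi, hj⟩ => ?_
  simp only at hi hj
  constructor
  · rcases le_or_gt q 0 with hq | hq
    · exact min_le_of_right_le (by nlinarith)
    · exact min_le_of_left_le hq.le
  · rcases le_or_gt q 0 with hq | hq
    · exact le_max_of_le_left hq
    · exact le_max_of_le_right (by nlinarith)

lemma injective_diag (hn : n ≠ 0) (x y : ℤ) : Injective fun q : ℤ => (x + q * n, y + q * n) :=
  fun _ _ h => mul_right_cancel₀ hn (add_left_cancel (congrArg Prod.fst h))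

lemma hasFiniteSupport_cone_indicator_diag (hn : 0 < n) (i j x y : ℤ) :
    HasFiniteSupport fun q : ℤ => (cone i j).indicator (1 : ℤ × ℤ → ℤ) (x + q * n, y + q * n) :=
  (finite_setOf_diag_mem_cone hn i j x y).subset fun q hq => by
    by_contra h
    exact hq (indicator_of_notMem h 1)

lemma coneSum_Eper (hn : n ≠ 0) (i j x y : ℤ) :
    coneSum i j (Eper n x y) = ∑ᶠ q : ℤ, (cone i j).indicator 1 (x + q * n, y + q * n) := by
  rw [coneSum, uncurry_Eper, indicator_indicator, inter_comm, ← indicator_indicator,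
    ← finsum_mem_def, finsum_mem_range (injective_diag hn x y)]

lemma coneFinite_Eper (hn : 0 < n) (i j x y : ℤ) : ConeFinite i j (Eper n x y) := by
  refine ((finite_setOf_diag_mem_cone hn i j x y).image fun q => (x + q * n, y + q * n)).subset ?_
  rw [uncurry_Eper, indicator_indicator]
  rintro p hp
  obtain ⟨hp, q, rfl⟩ := support_indicator_subset hp
  exact ⟨q, hp, rfl⟩

lemma coneFinite_Ethe (hn : 0 < n) (i j x y : ℤ) : ConeFinite i j (Ethe n x y) :=
  (coneFinite_Eper hn ..).add (coneFinite_Eper hn ..)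

lemma coneSum_Eper_sub_Eper_succ (hn : 0 < n) (i j x y : ℤ) :
    coneSum i j (fun a b => Eper n x y a b - Eper n (x + 1) y a b) =
      ∑ᶠ q : ℤ, ((cone i j).indicator 1 (x + q * n, y + q * n) -
        (cone i j).indicator 1 (x + 1 + q * n, y + q * n)) := by
  rw [coneSum_sub (coneFinite_Eper hn ..) (coneFinite_Eper hn ..), coneSum_Eper hn.ne',
    coneSum_Eper hn.ne', finsum_sub_distrib (hasFiniteSupport_cone_indicator_diag hn ..)
      (hasFiniteSupport_cone_indicator_diag hn ..)]

lemma monotone_coneSum_Eper_sub_Eper_succ (hn : 0 < n) (i j x : ℤ) :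
    Monotone fun y => coneSum i j (fun a b => Eper n x y a b - Eper n (x + 1) y a b) := by
  intro y y' hy
  simp only [coneSum_Eper_sub_Eper_succ hn]
  have hfin : ∀ y, HasFiniteSupport fun q : ℤ => (cone i j).indicator (1 : ℤ × ℤ → ℤ)
      (x + q * n, y + q * n) - (cone i j).indicator 1 (x + 1 + q * n, y + q * n) := fun y =>
    (hasFiniteSupport_cone_indicator_diag hn ..).sub (hasFiniteSupport_cone_indicator_diag hn ..)
  refine finsum_le_finsum' (hfin y) (hfin y') fun q => ?_
  simp only [indicator_apply, cone, mem_ofPred_eq, Pi.one_apply]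
  split_ifs <;> omega

lemma coneSum_Ethe_sub_Ethe_succ (hn : 0 < n) (i j x y : ℤ) :
    coneSum i j (fun a b => Ethe n x y a b - Ethe n (x + 1) y a b) =
      coneSum i j (fun a b => Eper n x y a b - Eper n (x + 1) y a b) -
        coneSum i j (fun a b => Eper n (-(x + 1)) (-y) a b - Eper n (-(x + 1) + 1) (-y) a b) := by
  rw [← coneSum_sub ((coneFinite_Eper hn ..).sub (coneFinite_Eper hn ..))
    ((coneFinite_Eper hn ..).sub (coneFinite_Eper hn ..)), show -(x + 1) + 1 = -x by ring]
  congr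
  ext a b
  simp only [Ethe]
  ring

lemma monotone_coneSum_Ethe_sub_Ethe_succ (hn : 0 < n) (i j x : ℤ) :
    Monotone fun y => coneSum i j (fun a b => Ethe n x y a b - Ethe n (x + 1) y a b) := by
  intro y y' hy
  simp only [coneSum_Ethe_sub_Ethe_succ hn]
  linarith [monotone_coneSum_Eper_sub_Eper_succ hn i j x hy,
    monotone_coneSum_Eper_sub_Eper_succ hn i j (-(x + 1)) (neg_le_neg hy)]

/-- Every point is a diagonal translate `s + m (n, n)` of a point `s` of the strip
`0 < s.1 ≤ n`, and for fixed `s` only finitely many translates lie in the cone. -/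
lemma finite_cone_inter_support_of_periodic {M : Type*} [Zero M] (hn : 0 < n) {f : ℤ × ℤ → M}
    (hper : Periodic f (n, n)) (hstrip : ({p | 0 < p.1 ∧ p.1 ≤ n} ∩ support f).Finite)
    (i j : ℤ) : (cone i j ∩ support f).Finite := by
  refine (hstrip.biUnion fun s _ => (finite_setOf_diag_mem_cone hn i j s.1 s.2).image
    fun m => (s.1 + m * n, s.2 + m * n)).subset ?_
  rintro p ⟨hp, hfp⟩
  set m := toIocDiv hn 0 p.1
  have hs := sub_toIocDiv_zsmul_mem_Ioc hn 0 p.1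
  rw [zero_add, smul_eq_mul] at hs
  refine mem_biUnion (x := (p.1 - m * n, p.2 - m * n)) ⟨hs, ?_⟩ ⟨m, ?_, ?_⟩
  · have := hper.sub_zsmul_eq (x := p) m
    rw [Prod.smul_mk, smul_eq_mul, Prod.mk_sub_mk] at this
    rwa [mem_support, this]
  · simpa using hp
  · simp

lemma coneFinite_natCast_of_periodic (hn : 0 < n) {A : ℤ → ℤ → ℕ}
    (hper : ∀ a b, A a b = A (a - n) (b - n))
    (hstrip : {p : ℤ × ℤ | 0 < p.1 ∧ p.1 ≤ n ∧ A p.1 p.2 ≠ 0}.Finite) (i j : ℤ) :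
    ConeFinite i j fun a b => (A a b : ℤ) := by
  have hper' : Periodic (uncurry A) (n, n) := fun p => by
    simpa [uncurry_def] using hper (p.1 + n) (p.2 + n)
  refine coneFinite_iff.2 ((finite_cone_inter_support_of_periodic hn hper' ?_ i j).subset ?_)
  · exact hstrip.subset fun p ⟨⟨h0, hn⟩, hA⟩ => ⟨h0, hn, hA⟩
  · exact fun p ⟨hp, hA⟩ => ⟨hp, fun h =>
      hA ((congrArg (Nat.cast : ℕ → ℤ) h).trans Nat.cast_zero)⟩

end Diagonal

end AffMat

theorem statement18_general (r : ℕ) (A : ℤ → ℤ → ℕ)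
    (hAper : ∀ i j : ℤ, A i j = A (i - (2 * r + 2)) (j - (2 * r + 2)))
    (hAfin : ∀ i₀ : ℤ, {p : ℤ × ℤ | i₀ < p.1 ∧ p.1 ≤ i₀ + (2 * r + 2) ∧ A p.1 p.2 ≠ 0}.Finite)
    (h : ℤ) (k : ℤ) (R : ℕ)
    (t : ℤ → ℕ) (htfin : (Function.support t).Finite)
    (htsum : ∑ᶠ u : ℤ, t u = R) (htk : ∀ u : ℤ, k < u → t u = 0) :
    ∀ i j : ℤ, i < j →
      (∑ᶠ a : ℤ, ∑ᶠ b : ℤ, if a ≤ i ∧ j ≤ b then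
          ((A a b : ℤ) + ∑ᶠ u : ℤ, (t u : ℤ) *
            (Ethe (2 * r + 2) h u a b - Ethe (2 * r + 2) (h + 1) u a b))
        else 0) ≤
      (∑ᶠ a : ℤ, ∑ᶠ b : ℤ, if a ≤ i ∧ j ≤ b then
          ((A a b : ℤ) + (R : ℤ) *
            (Ethe (2 * r + 2) h k a b - Ethe (2 * r + 2) (h + 1) k a b))
        else 0) := by
  intro i j _
  have hn : (0 : ℤ) < 2 * r + 2 := by positivity
  generalize (2 * r + 2 : ℤ) = n at hn hAper hAfin ⊢
  have hA := coneFinite_natCast_of_periodic hn hAper (by simpa using hAfin 0) i j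
  have hΔ : ∀ u, ConeFinite i j fun a b => Ethe n h u a b - Ethe n (h + 1) u a b :=
    fun u => (coneFinite_Ethe hn ..).sub (coneFinite_Ethe hn ..)
  have hT : ∀ a b, ∑ᶠ u, (t u : ℤ) * (Ethe n h u a b - Ethe n (h + 1) u a b) =
      ∑ u ∈ htfin.toFinset, (t u : ℤ) * (Ethe n h u a b - Ethe n (h + 1) u a b) :=
    fun a b => finsum_eq_sum_of_support_subset _ fun u hu => by
      simpa using left_ne_zero_of_mul hu
  have hR : (R : ℤ) = ∑ u ∈ htfin.toFinset, (t u : ℤ) := by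
    rw [← htsum, finsum_eq_sum _ htfin]
    push_cast
    rfl
  simp only [hT]
  rw [finsum_finsum_ite_add_eq_coneSum_add hA (.sum (fun u => (hΔ u).const_mul _) _),
    finsum_finsum_ite_add_eq_coneSum_add hA ((hΔ k).const_mul _),
    coneSum_sum (fun u => (hΔ u).const_mul _), coneSum_const_mul, hR, Finset.sum_mul]
  gcongr with u hu
  rw [coneSum_const_mul]
  gcongr
  exact monotone_coneSum_Ethe_sub_Ethe_succ hn i j h
    (not_lt.1 fun hku => htfin.mem_toFinset.1 hu (htk u hku))

/-- Let `n = 2r+2` with `r ≥ 2`, let `A` be a centrosymmetric `n`-periodic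
`ℕ`-matrix with finitely many nonzero entries in each strip, `1 ≤ h ≤ r-1`, `k ∈ ℤ`, `R ∈ ℕ`,
and let `t : ℤ → ℕ` be finitely supported with `Σ t_u = R` and `t_u = 0` for `u > k`.  With
`M = A + R (E^θ_{h,k} - E^θ_{h+1,k})` and `M′ = A + Σ_u t_u (E^θ_{h,u} - E^θ_{h+1,u})`,
we have `M′ ≤_alg M`. -/
theorem statement18 (r : ℕ) (hr : 2 ≤ r) (A : ℤ → ℤ → ℕ)
    (hAsym : ∀ i j : ℤ, A i j = A (-i) (-j))
    (hAper : ∀ i j : ℤ, A i j = A (i - (2 * r + 2)) (j - (2 * r + 2)))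
    (hAfin : ∀ i₀ : ℤ, {p : ℤ × ℤ | i₀ < p.1 ∧ p.1 ≤ i₀ + (2 * r + 2) ∧ A p.1 p.2 ≠ 0}.Finite)
    (h : ℤ) (hh1 : 1 ≤ h) (hhr : h ≤ (r : ℤ) - 1) (k : ℤ) (R : ℕ)
    (t : ℤ → ℕ) (htfin : (Function.support t).Finite)
    (htsum : ∑ᶠ u : ℤ, t u = R) (htk : ∀ u : ℤ, k < u → t u = 0) :
    ∀ i j : ℤ, i < j →
      (∑ᶠ a : ℤ, ∑ᶠ b : ℤ, if a ≤ i ∧ j ≤ b then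
          ((A a b : ℤ) + ∑ᶠ u : ℤ, (t u : ℤ) *
            (Ethe (2 * r + 2) h u a b - Ethe (2 * r + 2) (h + 1) u a b))
        else 0) ≤
      (∑ᶠ a : ℤ, ∑ᶠ b : ℤ, if a ≤ i ∧ j ≤ b then
          ((A a b : ℤ) + (R : ℤ) *
            (Ethe (2 * r + 2) h k a b - Ethe (2 * r + 2) (h + 1) k a b))
        else 0) :=
  statement18_general r A hAper hAfin h k R t htfin htsum htk
end
end
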